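/- arXiv:1605.08629 — 2 statements merged into one kernel-verified Lean document; each statement's English description precedes it below -/
import Mathlib

section
/- Every n×n semimagic square matrix M of weight w can be written uniquely as M = A + B + wE_n, where A is a weight-0 associated semimagic square matrix, B is a weight-0 balanced semimagic square matrix, and E_n is the all-ones matrix. In particular, A = (M - J_n M J_n)/2 and B = (M + J_n M J_n)/2 - wE_n. -/
open Matrix BigOperators

def IsSemimagic {n : ℕ} (M : Matrix (Fin n) (Fin n) ℝ) (w : ℝ) : Prop :=
  (∀ i, ∑ j, M i j = n * w) ∧ (∀ j, ∑ i, M i j = n * w)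

def Jmat (n : ℕ) : Matrix (Fin n) (Fin n) ℝ :=
  Matrix.of fun i j => if j = i.rev then 1 else 0

def Emat (n : ℕ) : Matrix (Fin n) (Fin n) ℝ := Matrix.of fun _ _ => 1

def IsAssoc0 {n : ℕ} (M : Matrix (Fin n) (Fin n) ℝ) : Prop :=
  IsSemimagic M 0 ∧ M = -(Jmat n * M * Jmat n)

def IsBal0 {n : ℕ} (M : Matrix (Fin n) (Fin n) ℝ) : Prop :=
  IsSemimagic M 0 ∧ M = Jmat n * M * Jmat n

lemma JMJ_apply {n : ℕ} (M : Matrix (Fin n) (Fin n) ℝ) (i j : Fin n) :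
    (Jmat n * M * Jmat n) i j = M i.rev j.rev := by
  simp [Jmat, Matrix.mul_apply, Finset.sum_ite_eq, ite_mul, mul_ite,
    Finset.sum_ite_eq', eq_comm (a := j), Fin.rev_eq_iff]

lemma sum_rev {n : ℕ} (f : Fin n → ℝ) : ∑ j, f (Fin.rev j) = ∑ j, f j :=
  Equiv.sum_comp (Fin.revPerm) f

theorem semimagic_decomposition (n : ℕ) (M : Matrix (Fin n) (Fin n) ℝ) (w : ℝ)
    (hM : IsSemimagic M w) :
    (IsAssoc0 ((1/2 : ℝ) • (M - Jmat n * M * Jmat n)) ∧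
     IsBal0 ((1/2 : ℝ) • (M + Jmat n * M * Jmat n) - w • Emat n) ∧
     M = (1/2 : ℝ) • (M - Jmat n * M * Jmat n)
         + ((1/2 : ℝ) • (M + Jmat n * M * Jmat n) - w • Emat n) + w • Emat n) ∧
    (∀ A B : Matrix (Fin n) (Fin n) ℝ,
      IsAssoc0 A → IsBal0 B → M = A + B + w • Emat n →
        A = (1/2 : ℝ) • (M - Jmat n * M * Jmat n) ∧
        B = (1/2 : ℝ) • (M + Jmat n * M * Jmat n) - w • Emat n) := by
  obtain ⟨hrow, hcol⟩ := hM
  have hrow' : ∀ i, ∑ j, (Jmat n * M * Jmat n) i j = n * w := by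
    intro i
    simp only [JMJ_apply]
    rw [sum_rev (fun j => M i.rev j)]
    exact hrow i.rev
  have hcol' : ∀ j, ∑ i, (Jmat n * M * Jmat n) i j = n * w := by
    intro j
    simp only [JMJ_apply]
    rw [sum_rev (fun i => M i j.rev)]
    exact hcol j.rev
  have hE : ∀ i : Fin n, ∑ j : Fin n, (1 : ℝ) = n * 1 := by
    intro i; simp
  constructor
  · refine ⟨⟨⟨?_, ?_⟩, ?_⟩, ⟨⟨?_, ?_⟩, ?_⟩, ?_⟩
    · intro i
      simp only [Matrix.smul_apply, Matrix.sub_apply, smul_eq_mul]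
      rw [← Finset.mul_sum, Finset.sum_sub_distrib, hrow i, hrow' i]
      ring
    · intro j
      simp only [Matrix.smul_apply, Matrix.sub_apply, smul_eq_mul]
      rw [← Finset.mul_sum, Finset.sum_sub_distrib, hcol j, hcol' j]
      ring
    · ext i j
      simp only [JMJ_apply, Matrix.smul_apply, Matrix.sub_apply, Matrix.neg_apply,
        Fin.rev_rev, smul_eq_mul]
      ring
    · intro i
      simp only [Matrix.smul_apply, Matrix.sub_apply, Matrix.add_apply, smul_eq_mul,
        Emat, Matrix.of_apply, mul_one]
      rw [Finset.sum_sub_distrib, ← Finset.mul_sum, Finset.sum_add_distrib,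
        hrow i, hrow' i, Finset.sum_const, Finset.card_fin, nsmul_eq_mul]
      ring
    · intro j
      simp only [Matrix.smul_apply, Matrix.sub_apply, Matrix.add_apply, smul_eq_mul,
        Emat, Matrix.of_apply, mul_one]
      rw [Finset.sum_sub_distrib, ← Finset.mul_sum, Finset.sum_add_distrib,
        hcol j, hcol' j, Finset.sum_const, Finset.card_fin, nsmul_eq_mul]
      ring
    · ext i j
      simp only [JMJ_apply, Matrix.smul_apply, Matrix.sub_apply, Matrix.add_apply,
        Fin.rev_rev, smul_eq_mul, Emat, Matrix.of_apply, mul_one]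
      ring
    · ext i j
      simp only [Matrix.smul_apply, Matrix.sub_apply, Matrix.add_apply,
        smul_eq_mul, Emat, Matrix.of_apply, mul_one]
      ring
  · rintro A B ⟨-, hA⟩ ⟨-, hB⟩ hMeq
    have hAij : ∀ i j, A i.rev j.rev = -A i j := by
      intro i j
      have h := congrFun (congrFun hA i.rev) j.rev
      rwa [Matrix.neg_apply, JMJ_apply, Fin.rev_rev, Fin.rev_rev] at h
    have hBij : ∀ i j, B i.rev j.rev = B i j := by
      intro i j
      have h := congrFun (congrFun hB i.rev) j.rev
      rwa [JMJ_apply, Fin.rev_rev, Fin.rev_rev] at h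
    have h1 : ∀ i j, M i j = A i j + B i j + w := by
      intro i j
      have h := congrFun (congrFun hMeq i) j
      simpa [Emat] using h
    have h2 : ∀ i j : Fin n, M i.rev j.rev = -A i j + B i j + w := by
      intro i j
      rw [h1 i.rev j.rev, hAij, hBij]
    constructor
    · ext i j
      simp only [JMJ_apply, Matrix.smul_apply, Matrix.sub_apply, smul_eq_mul]
      have := h1 i j; have := h2 i j; linarith
    · ext i j
      simp only [JMJ_apply, Matrix.smul_apply, Matrix.sub_apply, Matrix.add_apply,
        smul_eq_mul, Emat, Matrix.of_apply, mul_one]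
      have := h1 i j; have := h2 i j; linarith
end

section
/- A 2n×2n matrix M is a weight-0 associated semimagic square if and only if M = X_{2n} N X_{2n}, where N is the block matrix with zero diagonal blocks and off-diagonal blocks V^T (upper right) and W (lower left), where V, W are n×n matrices satisfying V·1_n = 0 and W·1_n = 0. -/
open Matrix BigOperators

/-- The exchange matrix of size `2n`, in block form `[[0, J],[J, 0]]`. -/
def J2mat (n : ℕ) : Matrix (Fin n ⊕ Fin n) (Fin n ⊕ Fin n) ℝ :=
  Matrix.fromBlocks 0 (Jmat n) (Jmat n) 0

/-- The block matrix `X_{2n} = (1/√2) [[I, J],[J, -I]]`. -/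
noncomputable def Xmat (n : ℕ) : Matrix (Fin n ⊕ Fin n) (Fin n ⊕ Fin n) ℝ :=
  (Real.sqrt 2)⁻¹ • Matrix.fromBlocks 1 (Jmat n) (Jmat n) (-1)

/-- Weight-0 semimagic: all row and column sums vanish. -/
def IsSemimagic0 {m : Type*} [Fintype m] (M : Matrix m m ℝ) : Prop :=
  (∀ i, ∑ j, M i j = 0) ∧ (∀ j, ∑ i, M i j = 0)

lemma JJ (n : ℕ) : Jmat n * Jmat n = 1 := by
  ext i j
  simp only [Jmat, Matrix.mul_apply, Matrix.of_apply, Matrix.one_apply,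
    ite_mul, one_mul, zero_mul]
  rw [Finset.sum_eq_single i.rev]
  · simp [Fin.rev_rev, eq_comm]
  · intro b _ hb; simp [hb]
  · simp

lemma JmulVec1 (n : ℕ) : Jmat n *ᵥ (fun _ => (1:ℝ)) = fun _ => 1 := by
  ext i
  simp [Jmat, Matrix.mulVec, dotProduct]

lemma JvecMul1 (n : ℕ) : (fun _ => (1:ℝ)) ᵥ* Jmat n = fun _ => 1 := by
  ext j
  simp only [Jmat, Matrix.vecMul, dotProduct, Matrix.of_apply, one_mul]
  rw [Finset.sum_eq_single j.rev]
  · rw [if_pos (Fin.rev_rev j).symm]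
  · intro b _ hb; rw [if_neg (fun hc => hb (by rw [hc, Fin.rev_rev]))]
  · simp

lemma vecMul_smul_aux {m k : Type*} [Fintype m] (c : ℝ) (A : Matrix m k ℝ)
    (v : m → ℝ) : v ᵥ* (c • A) = c • (v ᵥ* A) := by
  ext j
  simp [Matrix.vecMul, dotProduct, Finset.mul_sum, mul_left_comm]

lemma keyX (n : ℕ) (Q R : Matrix (Fin n) (Fin n) ℝ) :
    Xmat n * Matrix.fromBlocks 0 Q R 0 * Xmat n =
      (2:ℝ)⁻¹ • Matrix.fromBlocks
        (Jmat n * R + Q * Jmat n) (Jmat n * R * Jmat n - Q)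
        (Jmat n * Q * Jmat n - R) (-(R * Jmat n) - Jmat n * Q) := by
  have hs : (Real.sqrt 2)⁻¹ * (Real.sqrt 2)⁻¹ = (2:ℝ)⁻¹ := by
    rw [← mul_inv, Real.mul_self_sqrt (by norm_num)]
  simp only [Xmat, Matrix.smul_mul, Matrix.mul_smul, smul_smul, hs,
    Matrix.fromBlocks_multiply]
  congr 1
  rw [Matrix.fromBlocks_inj]
  refine ⟨?_, ?_, ?_, ?_⟩ <;> noncomm_ring

theorem assoc0_block_representation (n : ℕ) (M : Matrix (Fin n ⊕ Fin n) (Fin n ⊕ Fin n) ℝ) :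
    (IsSemimagic0 M ∧ M = -(J2mat n * M * J2mat n)) ↔
      ∃ V W : Matrix (Fin n) (Fin n) ℝ,
        V *ᵥ (fun _ => (1:ℝ)) = 0 ∧ W *ᵥ (fun _ => (1:ℝ)) = 0 ∧
        M = Xmat n * Matrix.fromBlocks 0 Vᵀ W 0 * Xmat n := by
  have hJJ := JJ n
  have hJJ' : ∀ X : Matrix (Fin n) (Fin n) ℝ, Jmat n * (Jmat n * X) = X := fun X => by
    rw [← mul_assoc, hJJ, one_mul]
  constructor
  · rintro ⟨⟨hrow, hcol⟩, hassoc⟩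
    set A := M.toBlocks₁₁ with hA0
    set B := M.toBlocks₁₂ with hB0
    set C := M.toBlocks₂₁ with hC0
    set D := M.toBlocks₂₂ with hD0
    have hM : M = Matrix.fromBlocks A B C D := (Matrix.fromBlocks_toBlocks M).symm
    have hJMJ : J2mat n * M * J2mat n =
        Matrix.fromBlocks (Jmat n * D * Jmat n) (Jmat n * C * Jmat n)
          (Jmat n * B * Jmat n) (Jmat n * A * Jmat n) := by
      rw [hM]
      simp only [J2mat, Matrix.fromBlocks_multiply]
      rw [Matrix.fromBlocks_inj]
      refine ⟨?_, ?_, ?_, ?_⟩ <;> noncomm_ring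
    have hass2 : Matrix.fromBlocks A B C D =
        Matrix.fromBlocks (-(Jmat n * D * Jmat n)) (-(Jmat n * C * Jmat n))
          (-(Jmat n * B * Jmat n)) (-(Jmat n * A * Jmat n)) := by
      rw [← Matrix.fromBlocks_neg, ← hJMJ, ← hM]
      exact hassoc
    rw [Matrix.fromBlocks_inj] at hass2
    obtain ⟨hA, hB, hC, hD⟩ := hass2
    -- vector forms of the semimagic conditions
    have hrowv : M *ᵥ (fun _ => (1:ℝ)) = 0 := by
      ext i; simpa [Matrix.mulVec, dotProduct] using hrow i
    have hcolv : (fun _ => (1:ℝ)) ᵥ* M = 0 := by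
      ext j; simpa [Matrix.vecMul, dotProduct] using hcol j
    rw [hM, Matrix.fromBlocks_mulVec] at hrowv
    rw [hM, Matrix.vecMul_fromBlocks] at hcolv
    have hCD : C *ᵥ (fun _ => (1:ℝ)) + D *ᵥ (fun _ => (1:ℝ)) = 0 :=
      funext fun i => congrFun hrowv (Sum.inr i)
    have hBD : (fun _ => (1:ℝ)) ᵥ* B + (fun _ => (1:ℝ)) ᵥ* D = 0 :=
      funext fun j => congrFun hcolv (Sum.inr j)
    refine ⟨(-B - Jmat n * D)ᵀ, -C - D * Jmat n, ?_, ?_, ?_⟩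
    · rw [Matrix.mulVec_transpose, Matrix.vecMul_sub, Matrix.vecMul_neg,
        ← Matrix.vecMul_vecMul, JvecMul1, sub_eq_add_neg, ← neg_add, hBD, neg_zero]
    · rw [Matrix.sub_mulVec, Matrix.neg_mulVec, ← Matrix.mulVec_mulVec, JmulVec1,
        sub_eq_add_neg, ← neg_add, hCD, neg_zero]
    · rw [Matrix.transpose_transpose, keyX, hM, Matrix.fromBlocks_smul,
        Matrix.fromBlocks_inj]
      refine ⟨?_, ?_, ?_, ?_⟩
      · rw [hA, hB]
        simp only [mul_sub, sub_mul, mul_add, add_mul, mul_neg, neg_mul, neg_neg,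
          mul_assoc, hJJ, hJJ', mul_one, one_mul]
        module
      · rw [hB]
        simp only [mul_sub, sub_mul, mul_add, add_mul, mul_neg, neg_mul, neg_neg,
          mul_assoc, hJJ, hJJ', mul_one, one_mul]
        module
      · rw [hC]
        simp only [mul_sub, sub_mul, mul_add, add_mul, mul_neg, neg_mul, neg_neg,
          mul_assoc, hJJ, hJJ', mul_one, one_mul]
        module
      · rw [hD, hC]
        simp only [mul_sub, sub_mul, mul_add, add_mul, mul_neg, neg_mul, neg_neg,
          mul_assoc, hJJ, hJJ', mul_one, one_mul]
        module
  · rintro ⟨V, W, hV, hW, rfl⟩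
    have hWi : ∀ i, ∑ j, W i j = 0 := fun i => by
      simpa [Matrix.mulVec, dotProduct] using congrFun hW i
    have hVi : ∀ i, ∑ j, V i j = 0 := fun i => by
      simpa [Matrix.mulVec, dotProduct] using congrFun hV i
    constructor
    · constructor
      · -- row sums
        intro i
        have h : (Xmat n * Matrix.fromBlocks 0 Vᵀ W 0 * Xmat n) *ᵥ (fun _ => (1:ℝ)) = 0 := by
          rw [← Matrix.mulVec_mulVec, ← Matrix.mulVec_mulVec]
          have hX1 : Xmat n *ᵥ (fun _ => (1:ℝ)) =
              (Real.sqrt 2)⁻¹ • Sum.elim (fun _ => (2:ℝ)) (fun _ => (0:ℝ)) := by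
            rw [Xmat, Matrix.smul_mulVec]
            congr 1
            rw [Matrix.fromBlocks_mulVec,
              show ((fun _ => (1:ℝ)) ∘ (Sum.inl : Fin n → Fin n ⊕ Fin n)) = fun _ => 1
                from rfl,
              show ((fun _ => (1:ℝ)) ∘ (Sum.inr : Fin n → Fin n ⊕ Fin n)) = fun _ => 1
                from rfl, JmulVec1]
            ext (x | x) <;>
              simp [Matrix.one_mulVec, Matrix.neg_mulVec] <;> norm_num
          rw [hX1, Matrix.mulVec_smul]
          have h2 : Matrix.fromBlocks 0 Vᵀ W 0 *ᵥ
              Sum.elim (fun _ => (2:ℝ)) (fun _ => (0:ℝ)) = 0 := by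
            rw [Matrix.fromBlocks_mulVec]
            ext (x | x) <;>
              simp [Function.comp, Matrix.mulVec, dotProduct, ← Finset.sum_mul, hWi]
          rw [h2, smul_zero, Matrix.mulVec_zero]
        simpa [Matrix.mulVec, dotProduct] using congrFun h i
      · -- column sums
        intro j
        have h : (fun _ => (1:ℝ)) ᵥ* (Xmat n * Matrix.fromBlocks 0 Vᵀ W 0 * Xmat n) = 0 := by
          rw [← Matrix.vecMul_vecMul, ← Matrix.vecMul_vecMul]
          have hX1 : (fun _ => (1:ℝ)) ᵥ* Xmat n =
              (Real.sqrt 2)⁻¹ • Sum.elim (fun _ => (2:ℝ)) (fun _ => (0:ℝ)) := by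
            rw [Xmat, vecMul_smul_aux]
            congr 1
            rw [Matrix.vecMul_fromBlocks,
              show ((fun _ => (1:ℝ)) ∘ (Sum.inl : Fin n → Fin n ⊕ Fin n)) = fun _ => 1
                from rfl,
              show ((fun _ => (1:ℝ)) ∘ (Sum.inr : Fin n → Fin n ⊕ Fin n)) = fun _ => 1
                from rfl, JvecMul1]
            ext (x | x) <;>
              simp [Matrix.vecMul_one, Matrix.vecMul_neg] <;> norm_num
          rw [hX1, Matrix.smul_vecMul]
          have h2 : Sum.elim (fun _ => (2:ℝ)) (fun _ => (0:ℝ)) ᵥ*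
              Matrix.fromBlocks 0 Vᵀ W 0 = 0 := by
            rw [Matrix.vecMul_fromBlocks]
            ext (x | x) <;>
              simp [Function.comp, Matrix.vecMul, dotProduct,
                Matrix.transpose_apply, ← Finset.mul_sum, hVi]
          rw [h2, smul_zero, Matrix.zero_vecMul]
        simpa [Matrix.vecMul, dotProduct] using congrFun h j
    · -- associated condition
      rw [keyX, Matrix.mul_smul, Matrix.smul_mul, ← smul_neg]
      congr 1
      rw [J2mat]
      simp only [Matrix.fromBlocks_multiply, Matrix.fromBlocks_neg]
      rw [Matrix.fromBlocks_inj]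
      refine ⟨?_, ?_, ?_, ?_⟩ <;>
        · simp only [mul_sub, sub_mul, mul_add, add_mul, mul_neg, neg_mul, neg_neg,
            neg_sub, mul_assoc, hJJ, hJJ', mul_one, one_mul, Matrix.zero_mul,
            Matrix.mul_zero, zero_add, add_zero, neg_zero, mul_zero, zero_mul]
          try abel
end
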